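/- Suppose (X_i, K_i)_{i=1}^N and (Y_i, L_i)_{i=1}^N satisfy the coupled Riccati system and H has full column rank. Then for every i ∈ {1,…,N}, the transfer function U_i is inner on the imaginary axis: for every ω ∈ ℝ such that iω is not in the spectrum of A^{KL}_{i,i−1}, U_i(iω)ᴴ U_i(iω) = I (the identity of size m_i+…+m_N), where ᴴ denotes conjugate transpose. -/

import Mathlib

open Matrix

namespace TriLQG

noncomputable section

variable {N : ℕ}

/-- Index type of an `(N+1)`-block partitioned coordinate space with block sizes `d`. -/
abbrev Idx {N : ℕ} (d : Fin (N+1) → ℕ) : Type := Σ k : Fin (N+1), Fin (d k)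

/-- Indices belonging to blocks `i, i+1, …, N`. -/
abbrev IdxGe {N : ℕ} (d : Fin (N+1) → ℕ) (i : Fin (N+1)) : Type := {x : Idx d // i ≤ x.1}

/-- Indices belonging to blocks `0, 1, …, i`. -/
abbrev IdxLe {N : ℕ} (d : Fin (N+1) → ℕ) (i : Fin (N+1)) : Type := {x : Idx d // x.1 ≤ i}

/-- The selector matrix `E^{↓i}` (columns of the identity for blocks `i,…,N`). -/
def padGe (d : Fin (N+1) → ℕ) (i : Fin (N+1)) : Matrix (Idx d) (IdxGe d i) ℝ :=
  Matrix.of fun r c => if r = (c : Idx d) then 1 else 0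

/-- The selector matrix `E^{↑i}` (columns of the identity for blocks `0,…,i`). -/
def padLe (d : Fin (N+1) → ℕ) (i : Fin (N+1)) : Matrix (Idx d) (IdxLe d i) ℝ :=
  Matrix.of fun r c => if r = (c : Idx d) then 1 else 0

/-- Complexification of a real matrix. -/
def mc {α β : Type*} (M : Matrix α β ℝ) : Matrix α β ℂ := M.map Complex.ofReal

/-- A real square matrix is Hurwitz if its (complex) spectrum lies in the open left half plane. -/
def IsHurwitz {t : Type*} [Fintype t] [DecidableEq t] (M : Matrix t t ℝ) : Prop :=
  ∀ z ∈ spectrum ℂ (mc M), z.re < 0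

open Classical in
/-- The (unique, symmetric, positive semidefinite) square root of a positive semidefinite
real matrix; junk value `0` if the matrix is not positive semidefinite. -/
def msqrt {t : Type*} [Fintype t] [DecidableEq t] (M : Matrix t t ℝ) : Matrix t t ℝ :=
  if h : M.PosSemidef then
    h.1.eigenvectorUnitary.1 * diagonal ((RCLike.ofReal : ℝ → ℝ) ∘ Real.sqrt ∘ h.1.eigenvalues) *
      (star h.1.eigenvectorUnitary : Matrix t t ℝ)
  else 0

/-- Full column rank. -/
def FullColRank {α β : Type*} [Fintype β] {R : Type*} [CommRing R] (M : Matrix α β R) : Prop :=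
  M.rank = Fintype.card β

/-- Full row rank. -/
def FullRowRank {α β : Type*} [Fintype α] [Fintype β] {R : Type*} [CommRing R]
    (M : Matrix α β R) : Prop :=
  M.rank = Fintype.card α

/-- `ARE_p(Ã,B̃,F̃,H̃)` together with its gain: `X` is a symmetric solution of the
control algebraic Riccati equation and `K` is the associated gain. -/
def AREp {n' m' q' : Type*} [Fintype n'] [Fintype m'] [Fintype q'] [DecidableEq m']
    (At : Matrix n' n' ℝ) (Bt : Matrix n' m' ℝ) (Ft : Matrix q' n' ℝ) (Ht : Matrix q' m' ℝ)
    (X : Matrix n' n' ℝ) (K : Matrix m' n' ℝ) : Prop :=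
  X.IsSymm ∧
  Atᵀ * X + X * At - (X * Bt + Ftᵀ * Ht) * (Htᵀ * Ht)⁻¹ * (X * Bt + Ftᵀ * Ht)ᵀ + Ftᵀ * Ft = 0 ∧
  K = -((Htᵀ * Ht)⁻¹ * (X * Bt + Ftᵀ * Ht)ᵀ)

/-- `ARE_d(Ã,C̃,W̃,Ṽ)` together with its gain. -/
def AREd {n' p' r' : Type*} [Fintype n'] [Fintype p'] [Fintype r'] [DecidableEq p']
    (At : Matrix n' n' ℝ) (Ct : Matrix p' n' ℝ) (Wt : Matrix n' r' ℝ) (Vt : Matrix p' r' ℝ)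
    (Y : Matrix n' n' ℝ) (L : Matrix n' p' ℝ) : Prop :=
  Y.IsSymm ∧
  At * Y + Y * Atᵀ - (Ct * Y + Vt * Wtᵀ)ᵀ * (Vt * Vtᵀ)⁻¹ * (Ct * Y + Vt * Wtᵀ) + Wt * Wtᵀ = 0 ∧
  L = -((Ct * Y + Vt * Wtᵀ)ᵀ * (Vt * Vtᵀ)⁻¹)

/-- Lower block triangular sparsity. -/
def IsLBT {N : ℕ} {d e : Fin (N+1) → ℕ} (M : Matrix (Idx d) (Idx e) ℝ) : Prop :=
  ∀ a : Idx d, ∀ b : Idx e, a.1 < b.1 → M a b = 0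

/-- The data of the `(N+1)`-player triangular plant. -/
structure Plant (N : ℕ) where
  nd : Fin (N+1) → ℕ
  md : Fin (N+1) → ℕ
  pd : Fin (N+1) → ℕ
  q : ℕ
  r : ℕ
  A : Matrix (Idx nd) (Idx nd) ℝ
  B : Matrix (Idx nd) (Idx md) ℝ
  C : Matrix (Idx pd) (Idx nd) ℝ
  F : Matrix (Fin q) (Idx nd) ℝ
  H : Matrix (Fin q) (Idx md) ℝ
  W : Matrix (Idx nd) (Fin r) ℝ
  V : Matrix (Idx pd) (Fin r) ℝ

variable (P : Plant N)

/-- family of controller gains `K_i ∈ ℝ^{(m_i+⋯+m_N)×n}` -/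
abbrev KGains (P : Plant N) : Type := (i : Fin (N+1)) → Matrix (IdxGe P.md i) (Idx P.nd) ℝ

/-- family of observer gains `L_i ∈ ℝ^{n×(p_1+⋯+p_i)}` -/
abbrev LGains (P : Plant N) : Type := (i : Fin (N+1)) → Matrix (Idx P.nd) (IdxLe P.pd i) ℝ

/-- family of symmetric matrices `X_i` (or `Y_i`) -/
abbrev SFam (P : Plant N) : Type := Fin (N+1) → Matrix (Idx P.nd) (Idx P.nd) ℝ

def Bdown (i : Fin (N+1)) : Matrix (Idx P.nd) (IdxGe P.md i) ℝ := P.B.submatrix id Subtype.val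
def Hdown (i : Fin (N+1)) : Matrix (Fin P.q) (IdxGe P.md i) ℝ := P.H.submatrix id Subtype.val
def Cup (i : Fin (N+1)) : Matrix (IdxLe P.pd i) (Idx P.nd) ℝ := P.C.submatrix Subtype.val id
def Vup (i : Fin (N+1)) : Matrix (IdxLe P.pd i) (Fin P.r) ℝ := P.V.submatrix Subtype.val id

/-- `Ψ_{↓i}^{↓i} = (H^{↓i})ᵀ H^{↓i}` -/
def Psidd (i : Fin (N+1)) : Matrix (IdxGe P.md i) (IdxGe P.md i) ℝ := (Hdown P i)ᵀ * Hdown P i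

/-- `Φ_{↑j}^{↑j} = V_{↑j} (V_{↑j})ᵀ` -/
def Phiuu (j : Fin (N+1)) : Matrix (IdxLe P.pd j) (IdxLe P.pd j) ℝ := Vup P j * (Vup P j)ᵀ

/-- The coupled Riccati system (2a)–(2d) of the paper. -/
def Coupled (X : SFam P) (K : KGains P) (Y : SFam P) (L : LGains P) : Prop :=
  AREp P.A (Bdown P 0) P.F (Hdown P 0) (X 0) (K 0) ∧
  (∀ t : Fin N,
    AREp (P.A + L t.castSucc * Cup P t.castSucc) (Bdown P t.succ)
      (-(Hdown P t.castSucc * K t.castSucc)) (Hdown P t.succ) (X t.succ) (K t.succ)) ∧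
  AREd P.A (Cup P (Fin.last N)) P.W (Vup P (Fin.last N)) (Y (Fin.last N)) (L (Fin.last N)) ∧
  (∀ t : Fin N,
    AREd (P.A + Bdown P t.succ * K t.succ) (Cup P t.castSucc)
      (-(L t.succ * Vup P t.succ)) (Vup P t.castSucc) (Y t.castSucc) (L t.castSucc))

/-- `A^{KL}_{k+1,k}` for `k = 0, 1, …, N+1` (`k = 0` gives `A+BK_1`,
`k = N+1` gives `A+L_N C`). -/
def AKL (K : KGains P) (L : LGains P) (k : Fin (N+2)) : Matrix (Idx P.nd) (Idx P.nd) ℝ :=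
  if hk : k.1 < N + 1 then
    (if k.1 = 0 then P.A + Bdown P 0 * K 0
     else
       have h1 : k.1 - 1 < N + 1 := by omega
       P.A + Bdown P ⟨k.1, hk⟩ * K ⟨k.1, hk⟩ +
         L ⟨k.1 - 1, h1⟩ * Cup P ⟨k.1 - 1, h1⟩)
  else P.A + L (Fin.last N) * Cup P (Fin.last N)

/-- index set of the `n(N+1)`-dimensional controller state space -/
abbrev CtrIx {N : ℕ} (nd : Fin (N+1) → ℕ) : Type := Fin (N+1) × Idx nd

/-- index set of the `n(N+2)`-dimensional closed-loop state space:
`N+1` controller blocks and one plant block -/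
abbrev BigIx {N : ℕ} (nd : Fin (N+1) → ℕ) : Type := CtrIx nd ⊕ Idx nd

/-- the incidence matrix `ζ` -/
def zetaN (nd : Fin (N+1) → ℕ) : Matrix (CtrIx nd) (CtrIx nd) ℝ :=
  Matrix.of fun x y => if y.1 ≤ x.1 ∧ x.2 = y.2 then 1 else 0

/-- block diagonal matrix -/
def blkDiagN {nd : Fin (N+1) → ℕ} (f : Fin (N+1) → Matrix (Idx nd) (Idx nd) ℝ) :
    Matrix (CtrIx nd) (CtrIx nd) ℝ :=
  Matrix.of fun x y => if x.1 = y.1 then f x.1 x.2 y.2 else 0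

/-- `A_K` of the optimal controller realization -/
def AK (K : KGains P) (L : LGains P) : Matrix (CtrIx P.nd) (CtrIx P.nd) ℝ :=
  blkDiagN (fun _ => P.A) + blkDiagN (fun k => L k * Cup P k) +
    zetaN P.nd * blkDiagN (fun k => Bdown P k * K k) * (zetaN P.nd)⁻¹

/-- `B_K` of the optimal controller realization -/
def BK (L : LGains P) : Matrix (CtrIx P.nd) (Idx P.pd) ℝ :=
  Matrix.of fun x c => -((L x.1 * (padLe P.pd x.1)ᵀ) x.2 c)

/-- `C_K` of the optimal controller realization -/
def CK (K : KGains P) : Matrix (Idx P.md) (CtrIx P.nd) ℝ :=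
  (Matrix.of fun rr (x : CtrIx P.nd) => (padGe P.md x.1 * K x.1) rr x.2) * (zetaN P.nd)⁻¹

/-- closed-loop `𝒜` -/
def Acal (K : KGains P) (L : LGains P) : Matrix (BigIx P.nd) (BigIx P.nd) ℝ :=
  Matrix.fromBlocks (AK P K L) (BK P L * P.C) (P.B * CK P K) P.A

/-- closed-loop `ℬ` -/
def Bcal : Matrix (BigIx P.nd) (Idx P.md) ℝ :=
  Matrix.of fun x j => Sum.elim (fun _ => (0:ℝ)) (fun a => P.B a j) x

/-- closed-loop `𝒲` -/
def Wcal (L : LGains P) : Matrix (BigIx P.nd) (Fin P.r) ℝ :=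
  Matrix.of fun x j => Sum.elim (fun y => (BK P L * P.V) y j) (fun a => P.W a j) x

/-- closed-loop `ℱ` -/
def Fcal (K : KGains P) : Matrix (Fin P.q) (BigIx P.nd) ℝ :=
  Matrix.of fun i x => Sum.elim (fun y => (P.H * CK P K) i y) (fun a => P.F i a) x

/-- closed-loop `𝒞` -/
def Ccal : Matrix (Idx P.pd) (BigIx P.nd) ℝ :=
  Matrix.of fun i x => Sum.elim (fun _ => (0:ℝ)) (fun a => P.C i a) x

/-- block index of a closed-loop index -/
def blkOf {nd : Fin (N+1) → ℕ} (x : BigIx nd) : Fin (N+2) :=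
  Sum.elim (fun y => y.1.castSucc) (fun _ => Fin.last (N+1)) x

/-- within-block state of a closed-loop index -/
def stOf {nd : Fin (N+1) → ℕ} (x : BigIx nd) : Idx nd :=
  Sum.elim Prod.snd id x

/-- the incidence matrix `ζ̄` of the `(N+2)`-fold block structure -/
def zetaBar (nd : Fin (N+1) → ℕ) : Matrix (BigIx nd) (BigIx nd) ℝ :=
  Matrix.of fun x y => if blkOf y ≤ blkOf x ∧ stOf x = stOf y then 1 else 0

/-- embedding of a within-block index into the closed-loop index set, at block `k` -/
def emb {nd : Fin (N+1) → ℕ} (k : Fin (N+2)) (a : Idx nd) : BigIx nd :=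
  if h : k.1 < N + 1 then Sum.inl (⟨⟨k.1, h⟩, a⟩ : CtrIx nd) else Sum.inr a

/-- `𝒦_i` of the paper (eq. (9)). -/
def Kcal (K : KGains P) (i : Fin (N+1)) : Matrix (IdxGe P.md i) (BigIx P.nd) ℝ :=
  (padGe P.md i)ᵀ *
    Matrix.of fun (rr : Idx P.md) (x : BigIx P.nd) =>
      Sum.elim
        (fun y : CtrIx P.nd =>
          if hl : y.1.1 < N then
            (if y.1 < i then (0:ℝ)
             else
               have h1 : y.1.1 + 1 < N + 1 := by omega
               (padGe P.md ⟨y.1.1 + 1, h1⟩ * K ⟨y.1.1 + 1, h1⟩ -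
                   padGe P.md y.1 * K y.1) rr y.2)
          else (-(padGe P.md (Fin.last N) * K (Fin.last N))) rr y.2)
        (fun a => (padGe P.md i * K i) rr a) x

/-- `ℒ_j` of the paper (eq. (10)). -/
def Lcal (L : LGains P) (j : Fin (N+1)) : Matrix (BigIx P.nd) (IdxLe P.pd j) ℝ :=
  Matrix.of fun x c =>
    Sum.elim
      (fun y : CtrIx P.nd =>
        if y.1 < j then (L y.1 * (padLe P.pd y.1)ᵀ * padLe P.pd j) y.2 c else (L j) y.2 c)
      (fun a => (L j) a c) x

/-- `J̃_i` of the paper (eq. (11)). -/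
def Jtil (nd : Fin (N+1) → ℕ) (i : Fin (N+1)) : Matrix (Idx nd) (BigIx nd) ℝ :=
  Matrix.of fun a x =>
    Sum.elim
      (fun y : CtrIx nd => if 0 < i.1 ∧ y.1.1 = i.1 - 1 ∧ a = y.2 then (1:ℝ) else 0)
      (fun b => if a = b then (-1:ℝ) else 0) x

/-- `Ĵ_j` of the paper (eq. (11)). -/
def Jhat (nd : Fin (N+1) → ℕ) (j : Fin (N+1)) : Matrix (BigIx nd) (Idx nd) ℝ :=
  Matrix.of fun x a =>
    Sum.elim
      (fun y : CtrIx nd => if j < y.1 ∧ y.2 = a then (1:ℝ) else 0)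
      (fun b => if b = a then (1:ℝ) else 0) x

/-- `Γ_i = −(Ψ_{↓i}^{↓i})^{1/2} 𝒦_i` for `i ≥ 1` (Lemma 2 of the paper). -/
def Gam (K : KGains P) (i : Fin (N+1)) : Matrix (IdxGe P.md i) (BigIx P.nd) ℝ :=
  -(msqrt (Psidd P i) * Kcal P K i)

/-- `Λ_j = −ℒ_j (Φ_{↑j}^{↑j})^{1/2}` for `j ≤ N` (Lemma 2 of the paper). -/
def Lam (L : LGains P) (j : Fin (N+1)) : Matrix (BigIx P.nd) (IdxLe P.pd j) ℝ :=
  -(Lcal P L j * msqrt (Phiuu P j))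

/-- the inner factor `U_1(s)` -/
def Uone (K : KGains P) (L : LGains P) (s : ℂ) : Matrix (Fin P.q) (IdxGe P.md 0) ℂ :=
  mc (P.F + Hdown P 0 * K 0) * (s • 1 - mc (AKL P K L 0))⁻¹ * mc (Bdown P 0) *
      (mc (msqrt (Psidd P 0)))⁻¹ +
    mc (Hdown P 0) * (mc (msqrt (Psidd P 0)))⁻¹

/-- the inner factor `U_{t+2}(s)` (paper indexing), mapping block level `t+1` to `t` -/
def Usucc (K : KGains P) (L : LGains P) (t : Fin N) (s : ℂ) :
    Matrix (IdxGe P.md t.castSucc) (IdxGe P.md t.succ) ℂ :=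
  mc (msqrt (Psidd P t.castSucc)) *
      mc ((padGe P.md t.castSucc)ᵀ *
        (padGe P.md t.succ * K t.succ - padGe P.md t.castSucc * K t.castSucc)) *
      (s • 1 - mc (AKL P K L t.succ.castSucc))⁻¹ * mc (Bdown P t.succ) *
      (mc (msqrt (Psidd P t.succ)))⁻¹ +
    mc (msqrt (Psidd P t.castSucc)) * mc ((padGe P.md t.castSucc)ᵀ * padGe P.md t.succ) *
      (mc (msqrt (Psidd P t.succ)))⁻¹

/-- the co-inner factor `V_{N+1}(s)` (paper indexing: the last one) -/
def Vlast (K : KGains P) (L : LGains P) (s : ℂ) :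
    Matrix (IdxLe P.pd (Fin.last N)) (Fin P.r) ℂ :=
  (mc (msqrt (Phiuu P (Fin.last N))))⁻¹ * mc (Cup P (Fin.last N)) *
      (s • 1 - mc (AKL P K L (Fin.last (N+1))))⁻¹ *
      mc (P.W + L (Fin.last N) * Vup P (Fin.last N)) +
    (mc (msqrt (Phiuu P (Fin.last N))))⁻¹ * mc (Vup P (Fin.last N))

/-- the co-inner factor `V_{t+1}(s)` (paper indexing), for `t+1 ≤ N` -/
def Vmid (K : KGains P) (L : LGains P) (t : Fin N) (s : ℂ) :
    Matrix (IdxLe P.pd t.castSucc) (IdxLe P.pd t.succ) ℂ :=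
  (mc (msqrt (Phiuu P t.castSucc)))⁻¹ * mc (Cup P t.castSucc) *
      (s • 1 - mc (AKL P K L t.succ.castSucc))⁻¹ *
      mc ((L t.castSucc * (padLe P.pd t.castSucc)ᵀ - L t.succ * (padLe P.pd t.succ)ᵀ) *
        padLe P.pd t.succ * msqrt (Phiuu P t.succ)) +
    (mc (msqrt (Phiuu P t.castSucc)))⁻¹ *
      mc ((padLe P.pd t.castSucc)ᵀ * padLe P.pd t.succ * msqrt (Phiuu P t.succ))

/-- the product `U_1(s) U_2(s) ⋯ U_i(s)` -/
def Uprod (K : KGains P) (L : LGains P) (s : ℂ) :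
    (i : Fin (N+1)) → Matrix (Fin P.q) (IdxGe P.md i) ℂ :=
  Fin.induction (motive := fun i => Matrix (Fin P.q) (IdxGe P.md i) ℂ)
    (Uone P K L s) (fun t ih => ih * Usucc P K L t s)

/-- the product `V_j(s) V_{j+1}(s) ⋯ V_{N+1}(s)` -/
def Vprod (K : KGains P) (L : LGains P) (s : ℂ) :
    (j : Fin (N+1)) → Matrix (IdxLe P.pd j) (Fin P.r) ℂ :=
  Fin.reverseInduction (motive := fun j => Matrix (IdxLe P.pd j) (Fin P.r) ℂ)
    (Vlast P K L s) (fun t ih => Vmid P K L t s * ih)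

/-- closed-loop transfer function `G11(s) = ℱ(sI−𝒜)⁻¹𝒲` -/
def G11 (K : KGains P) (L : LGains P) (s : ℂ) : Matrix (Fin P.q) (Fin P.r) ℂ :=
  mc (Fcal P K) * (s • 1 - mc (Acal P K L))⁻¹ * mc (Wcal P L)

/-- closed-loop transfer function `G12(s) = ℱ(sI−𝒜)⁻¹ℬ + H` -/
def G12 (K : KGains P) (L : LGains P) (s : ℂ) : Matrix (Fin P.q) (Idx P.md) ℂ :=
  mc (Fcal P K) * (s • 1 - mc (Acal P K L))⁻¹ * mc (Bcal P) + mc P.H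

/-- closed-loop transfer function `G21(s) = 𝒞(sI−𝒜)⁻¹𝒲 + V` -/
def G21 (K : KGains P) (L : LGains P) (s : ℂ) : Matrix (Idx P.pd) (Fin P.r) ℂ :=
  mc (Ccal P) * (s • 1 - mc (Acal P K L))⁻¹ * mc (Wcal P L) + mc P.V

end

end TriLQG

/-!
Each `U_i` is, up to the normalisations by `(Ψ_{↓i}^{↓i})^{±1/2}`, the transfer matrix
`(F̃ + H̃K)(sI − Ã − B̃K)⁻¹B̃ + H̃` of the `i`-th Riccati equation `ARE_p(Ã, B̃, F̃, H̃)` of the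
coupled system. Completing the square in that equation gives the closed-loop Lyapunov identity
`(F̃ + H̃K)ᵀ(F̃ + H̃K) + (Ã + B̃K)ᵀX + X(Ã + B̃K) = 0` together with `H̃ᵀ(F̃ + H̃K) = −B̃ᵀX`, and
these make the realization lossless: on the imaginary axis its Gram matrix is the constant
`H̃ᵀH̃`, which the inverse square root normalises to the identity. For `i ≥ 2` the left factor
`(Ψ_{↓i−1}^{↓i−1})^{1/2}` has the same Gram matrix as `H^{↓i−1}`, and replacing one by the other
turns `U_i` into that transfer matrix, because `−H^{↓i−1}K_{i−1} + H^{↓i}K_i` is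
`H(E^{↓i}K_i − E^{↓i−1}K_{i−1})` and the latter only involves the blocks `i−1, …, N`.
-/

namespace TriLQG

open Matrix

section Complexification

variable {l n m : Type*}

theorem mc_mul [Fintype n] (M : Matrix l n ℝ) (M' : Matrix n m ℝ) :
    mc (M * M') = mc M * mc M' :=
  Matrix.map_mul (f := Complex.ofRealHom)

theorem mc_add (M M' : Matrix n m ℝ) : mc (M + M') = mc M + mc M' :=
  Matrix.map_add _ (by simp) _ _

theorem mc_neg (M : Matrix n m ℝ) : mc (-M) = -mc M := Matrix.map_neg _ (by simp) _

theorem conjTranspose_mc (M : Matrix n m ℝ) : (mc M)ᴴ = mc Mᵀ := by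
  ext; simp [mc]

theorem isUnit_det_mc [Fintype n] [DecidableEq n] {M : Matrix n n ℝ} (h : IsUnit M.det) :
    IsUnit (mc M).det := by
  have := (h.map Complex.ofRealHom).ne_zero
  rw [RingHom.map_det] at this
  exact isUnit_iff_ne_zero.mpr this

theorem conjTranspose_mc_mul_mul_self {p p' : Type*} [Fintype p] [Fintype p'] [Fintype n]
    {Q : Matrix p n ℝ} {R : Matrix p' n ℝ} (h : Qᵀ * Q = Rᵀ * R) (T : Matrix n m ℂ) :
    (mc Q * T)ᴴ * (mc Q * T) = (mc R * T)ᴴ * (mc R * T) := by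
  simp only [conjTranspose_mul, Matrix.mul_assoc]
  rw [← Matrix.mul_assoc (mc Q)ᴴ, ← Matrix.mul_assoc (mc R)ᴴ, conjTranspose_mc,
    conjTranspose_mc, ← mc_mul, ← mc_mul, h]

theorem conjTranspose_smul_one_sub_mc [DecidableEq n] {s : ℂ} (hs : star s = -s)
    (A : Matrix n n ℝ) : (s • 1 - mc A)ᴴ = -(s • 1 + mc Aᵀ) := by
  rw [conjTranspose_sub, conjTranspose_smul, conjTranspose_one, hs, conjTranspose_mc, neg_smul,
    neg_add']

theorem star_I_mul_ofReal (ω : ℝ) : star (Complex.I * ω) = -(Complex.I * ω) := by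
  simp

theorem isUnit_smul_one_sub_of_notMem_spectrum [Fintype n] [DecidableEq n]
    {M : Matrix n n ℂ} {s : ℂ} (h : s ∉ spectrum ℂ M) : IsUnit (s • 1 - M) := by
  simpa [Algebra.algebraMap_eq_smul_one] using spectrum.notMem_iff.mp h

end Complexification

section Lossless

variable {R : Type*} [CommRing R] [StarRing R] {n m q : Type*} [Fintype n] [Fintype q]

theorem conjTranspose_mul_self_of_lyapunov {b y : Matrix n m R} {c : Matrix q n R}
    {d : Matrix q m R} {x S : Matrix n n R} (hy : S * y = b) (hx : xᴴ = x)
    (hc : cᴴ * c = Sᴴ * x + x * S) (hd : dᴴ * c = -(bᴴ * x)) :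
    (c * y + d)ᴴ * (c * y + d) = dᴴ * d := by
  have hcd : cᴴ * d = -(x * b) := by
    simpa [hx] using congrArg conjTranspose hd
  calc (c * y + d)ᴴ * (c * y + d)
      = yᴴ * (cᴴ * c) * y + yᴴ * (cᴴ * d) + dᴴ * c * y + dᴴ * d := by
        simp only [conjTranspose_add, conjTranspose_mul, Matrix.add_mul, Matrix.mul_add,
          Matrix.mul_assoc]
        abel
    _ = (S * y)ᴴ * x * y + yᴴ * x * (S * y) - yᴴ * x * b - bᴴ * x * y + dᴴ * d := by
        rw [hc, hcd, hd]
        simp only [conjTranspose_mul, Matrix.add_mul, Matrix.mul_add, Matrix.neg_mul,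
          Matrix.mul_neg, Matrix.mul_assoc]
        abel
    _ = dᴴ * d := by
        rw [hy]
        abel

theorem conjTranspose_mul_inv_mul_self [DecidableEq m] [Fintype m] {G : Matrix q m R}
    {S : Matrix m m R} (hS : IsUnit S.det) (hG : Gᴴ * G = Sᴴ * S) :
    (G * S⁻¹)ᴴ * (G * S⁻¹) = 1 := by
  rw [conjTranspose_mul, Matrix.mul_assoc, ← Matrix.mul_assoc Gᴴ, hG, Matrix.mul_assoc,
    mul_nonsing_inv _ hS, Matrix.mul_one, ← conjTranspose_mul, mul_nonsing_inv _ hS,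
    conjTranspose_one]

end Lossless

section Realization

variable {n m q : Type*} [Fintype n] [DecidableEq n] [Fintype q]

noncomputable def transferMatrix (A : Matrix n n ℝ) (B : Matrix n m ℝ) (C : Matrix q n ℝ)
    (D : Matrix q m ℝ) (s : ℂ) : Matrix q m ℂ :=
  mc C * (s • 1 - mc A)⁻¹ * mc B + mc D

theorem mc_mul_transferMatrix {p : Type*} (M : Matrix p q ℝ) (A : Matrix n n ℝ)
    (B : Matrix n m ℝ) (C : Matrix q n ℝ) (D : Matrix q m ℝ) (s : ℂ) :
    mc M * transferMatrix A B C D s = transferMatrix A B (M * C) (M * D) s := by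
  simp only [transferMatrix, mc_mul, Matrix.mul_add, Matrix.mul_assoc]

theorem conjTranspose_transferMatrix_mul_self {A X : Matrix n n ℝ} {B : Matrix n m ℝ}
    {C : Matrix q n ℝ} {D : Matrix q m ℝ} (hX : X.IsSymm) (hC : Cᵀ * C = -(Aᵀ * X + X * A))
    (hD : Dᵀ * C = -(Bᵀ * X)) {s : ℂ} (hs : star s = -s) (hA : IsUnit (s • 1 - mc A)) :
    (transferMatrix A B C D s)ᴴ * transferMatrix A B C D s = mc (Dᵀ * D) := by
  rw [transferMatrix, Matrix.mul_assoc, mc_mul, ← conjTranspose_mc]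
  refine conjTranspose_mul_self_of_lyapunov (b := mc B) (S := s • 1 - mc A) (x := mc X)
    ?_ ?_ ?_ ?_
  · rw [← Matrix.mul_assoc, mul_nonsing_inv _ ((isUnit_iff_isUnit_det _).mp hA),
      Matrix.one_mul]
  · rw [conjTranspose_mc, hX]
  · rw [conjTranspose_mc, ← mc_mul, hC, conjTranspose_smul_one_sub_mc hs]
    simp only [mc_neg, mc_add, mc_mul, Matrix.neg_mul, Matrix.add_mul, Matrix.mul_sub,
      Matrix.smul_mul, Matrix.mul_smul, Matrix.one_mul, Matrix.mul_one]
    abel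
  · rw [conjTranspose_mc, conjTranspose_mc, ← mc_mul, ← mc_mul, hD, mc_neg]

end Realization

namespace AREp

variable {n m q : Type*} [Fintype n] [Fintype m] [Fintype q] [DecidableEq m]
  {At : Matrix n n ℝ} {Bt : Matrix n m ℝ} {Ft : Matrix q n ℝ} {Ht : Matrix q m ℝ}
  {X : Matrix n n ℝ} {K : Matrix m n ℝ}

theorem transpose_mul_output (hare : AREp At Bt Ft Ht X K) (hΨ : IsUnit (Htᵀ * Ht).det) :
    Htᵀ * (Ft + Ht * K) = -(Btᵀ * X) := by
  obtain ⟨hX, -, rfl⟩ := hare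
  rw [Matrix.mul_add, ← Matrix.mul_assoc, Matrix.mul_neg, ← Matrix.mul_assoc,
    mul_nonsing_inv _ hΨ, Matrix.one_mul, transpose_add, transpose_mul, transpose_mul,
    transpose_transpose, hX]
  abel

theorem closedLoop_lyapunov (hare : AREp At Bt Ft Ht X K) (hΨ : IsUnit (Htᵀ * Ht).det) :
    (Ft + Ht * K)ᵀ * (Ft + Ht * K) = -((At + Bt * K)ᵀ * X + X * (At + Bt * K)) := by
  have hout := hare.transpose_mul_output hΨ
  obtain ⟨-, hric, hK⟩ := hare
  have hMK : (X * Bt + Ftᵀ * Ht) * K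
      = -((X * Bt + Ftᵀ * Ht) * (Htᵀ * Ht)⁻¹ * (X * Bt + Ftᵀ * Ht)ᵀ) := by
    rw [hK, Matrix.mul_neg, Matrix.mul_assoc]
  rw [eq_neg_iff_add_eq_zero, ← hric]
  calc (Ft + Ht * K)ᵀ * (Ft + Ht * K) + ((At + Bt * K)ᵀ * X + X * (At + Bt * K))
      = Atᵀ * X + X * At + (X * Bt + Ftᵀ * Ht) * K + Ftᵀ * Ft
          + Kᵀ * (Htᵀ * (Ft + Ht * K) + Btᵀ * X) := by
        simp only [transpose_add, transpose_mul, Matrix.add_mul, Matrix.mul_add,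
          Matrix.mul_assoc]
        abel
    _ = _ := by
        rw [hout, neg_add_cancel, Matrix.mul_zero, add_zero, hMK]
        abel

theorem conjTranspose_transferMatrix_mul_self [DecidableEq n] (hare : AREp At Bt Ft Ht X K)
    (hΨ : IsUnit (Htᵀ * Ht).det) {s : ℂ} (hs : star s = -s)
    (hA : IsUnit (s • 1 - mc (At + Bt * K))) :
    (transferMatrix (At + Bt * K) Bt (Ft + Ht * K) Ht s)ᴴ *
      transferMatrix (At + Bt * K) Bt (Ft + Ht * K) Ht s = mc (Htᵀ * Ht) :=
  TriLQG.conjTranspose_transferMatrix_mul_self hare.1 (hare.closedLoop_lyapunov hΨ)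
    (hare.transpose_mul_output hΨ) hs hA

end AREp

section SquareRoot

variable {n : Type*} [Fintype n] [DecidableEq n] {M : Matrix n n ℝ}

theorem transpose_msqrt_mul_msqrt (hM : M.PosSemidef) : (msqrt M)ᵀ * msqrt M = M := by
  set U := hM.1.eigenvectorUnitary
  set D := diagonal ((RCLike.ofReal : ℝ → ℝ) ∘ Real.sqrt ∘ hM.1.eigenvalues)
  have hmsqrt : msqrt M = U.1 * D * (star U : Matrix n n ℝ) := by rw [msqrt, dif_pos hM]
  have hUU : (star U : Matrix n n ℝ) * U.1 = 1 := Unitary.star_mul_self_of_mem U.2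
  have hDD : D * D = diagonal ((RCLike.ofReal : ℝ → ℝ) ∘ hM.1.eigenvalues) := by
    rw [diagonal_mul_diagonal]
    congr 1; funext i
    simp [Real.mul_self_sqrt (hM.eigenvalues_nonneg i)]
  have hsymm : (msqrt M)ᵀ = msqrt M := by
    rw [hmsqrt, ← conjTranspose_eq_transpose_of_trivial, conjTranspose_mul, conjTranspose_mul,
      star_eq_conjTranspose, conjTranspose_conjTranspose, diagonal_conjTranspose,
      Matrix.mul_assoc]
    congr 2
  conv_rhs => rw [hM.1.spectral_theorem, Unitary.conjStarAlgAut_apply]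
  rw [hsymm, hmsqrt]
  calc U.1 * D * (star U : Matrix n n ℝ) * (U.1 * D * (star U : Matrix n n ℝ))
      = U.1 * D * ((star U : Matrix n n ℝ) * U.1) * D * (star U : Matrix n n ℝ) := by
        simp only [Matrix.mul_assoc]
    _ = _ := by rw [hUU, Matrix.mul_one, Matrix.mul_assoc U.1 D D, hDD]

theorem isUnit_det_msqrt (hM : M.PosDef) : IsUnit (msqrt M).det := by
  have h := (isUnit_iff_isUnit_det M).mp hM.isUnit
  rw [← transpose_msqrt_mul_msqrt hM.posSemidef, det_mul, det_transpose] at h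
  exact isUnit_of_mul_isUnit_left h

theorem conjTranspose_mul_inv_mc_msqrt {q : Type*} [Fintype q] {G : Matrix q n ℂ}
    (hM : M.PosDef) (hG : Gᴴ * G = mc M) :
    (G * (mc (msqrt M))⁻¹)ᴴ * (G * (mc (msqrt M))⁻¹) = 1 := by
  refine conjTranspose_mul_inv_mul_self (isUnit_det_mc (isUnit_det_msqrt hM)) ?_
  rw [hG, conjTranspose_mc, ← mc_mul, transpose_msqrt_mul_msqrt hM.posSemidef]

end SquareRoot

theorem FullColRank.injective_mulVec {q m : Type*} [Fintype m] {M : Matrix q m ℝ}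
    (h : FullColRank M) : Function.Injective M.mulVec := by
  rw [mulVec_injective_iff, linearIndependent_iff_card_eq_finrank_span]
  exact h.symm.trans (rank_eq_finrank_span_cols M)

section Selectors

variable {N : ℕ} (d : Fin (N+1) → ℕ)

theorem transpose_padGe_mul_padGe (i : Fin (N+1)) : (padGe d i)ᵀ * padGe d i = 1 := by
  ext a b
  simp [padGe, Matrix.mul_apply, Matrix.one_apply, Subtype.ext_iff, eq_comm]

theorem padGe_mul_transpose_mul_padGe {i i' : Fin (N+1)} (h : i ≤ i') :
    padGe d i * ((padGe d i)ᵀ * padGe d i') = padGe d i' := by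
  ext r b
  simp only [padGe, Matrix.mul_apply, of_apply, transpose_apply, mul_ite, mul_one, mul_zero,
    Finset.sum_ite_eq', Finset.mem_univ, if_true]
  rw [Finset.sum_eq_single ⟨b, h.trans b.2⟩]
  · simp
  · intro c _ hc
    rw [if_neg fun e => hc (Subtype.ext e.symm)]
  · simp

theorem padGe_mul_transpose_mul_padGe_mul {i i' : Fin (N+1)} (h : i ≤ i') {α : Type*}
    (M : Matrix (IdxGe d i') α ℝ) :
    padGe d i * ((padGe d i)ᵀ * (padGe d i' * M)) = padGe d i' * M := by
  rw [← Matrix.mul_assoc (padGe d i)ᵀ, ← Matrix.mul_assoc, padGe_mul_transpose_mul_padGe d h]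

end Selectors

section Plant

variable {N : ℕ} (P : Plant N)

theorem Hdown_eq_mul_padGe (i : Fin (N+1)) : Hdown P i = P.H * padGe P.md i := by
  ext r c
  simp [Hdown, padGe, Matrix.mul_apply]

theorem Psidd_posDef (hH : FullColRank P.H) (i : Fin (N+1)) : (Psidd P i).PosDef := by
  rw [Psidd, ← conjTranspose_eq_transpose_of_trivial]
  refine PosDef.conjTranspose_mul_self _ fun x y hxy => ?_
  have hE : Function.Injective (padGe P.md i).mulVec := fun x y hxy => by
    simpa [mulVec_mulVec, transpose_padGe_mul_padGe] using congrArg (padGe P.md i)ᵀ.mulVec hxy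
  rw [Hdown_eq_mul_padGe, ← mulVec_mulVec, ← mulVec_mulVec] at hxy
  exact hE (hH.injective_mulVec hxy)

variable (K : KGains P) (L : LGains P)

theorem AKL_zero : AKL P K L 0 = P.A + Bdown P 0 * K 0 := by
  simp [AKL]

theorem AKL_castSucc_succ (t : Fin N) :
    AKL P K L t.succ.castSucc =
      P.A + L t.castSucc * Cup P t.castSucc + Bdown P t.succ * K t.succ := by
  rw [AKL, dif_pos (by simp), if_neg (by simp), add_right_comm]
  rfl

theorem Uone_eq (s : ℂ) :
    Uone P K L s = transferMatrix (P.A + Bdown P 0 * K 0) (Bdown P 0) (P.F + Hdown P 0 * K 0)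
      (Hdown P 0) s * (mc (msqrt (Psidd P 0)))⁻¹ := by
  rw [Uone, transferMatrix, AKL_zero, Matrix.add_mul]

theorem Usucc_eq (t : Fin N) (s : ℂ) :
    Usucc P K L t s = mc (msqrt (Psidd P t.castSucc)) *
      transferMatrix (AKL P K L t.succ.castSucc) (Bdown P t.succ)
        ((padGe P.md t.castSucc)ᵀ *
          (padGe P.md t.succ * K t.succ - padGe P.md t.castSucc * K t.castSucc))
        ((padGe P.md t.castSucc)ᵀ * padGe P.md t.succ) s *
      (mc (msqrt (Psidd P t.succ)))⁻¹ := by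
  simp only [Usucc, transferMatrix, Matrix.mul_add, Matrix.add_mul, Matrix.mul_assoc]

theorem mc_Hdown_mul_transferMatrix (t : Fin N) (A' : Matrix (Idx P.nd) (Idx P.nd) ℝ) (s : ℂ) :
    mc (Hdown P t.castSucc) *
      transferMatrix A' (Bdown P t.succ)
        ((padGe P.md t.castSucc)ᵀ *
          (padGe P.md t.succ * K t.succ - padGe P.md t.castSucc * K t.castSucc))
        ((padGe P.md t.castSucc)ᵀ * padGe P.md t.succ) s =
      transferMatrix A' (Bdown P t.succ)
        (-(Hdown P t.castSucc * K t.castSucc) + Hdown P t.succ * K t.succ) (Hdown P t.succ) s := by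
  have hle : t.castSucc ≤ t.succ := Fin.castSucc_le_succ t
  rw [mc_mul_transferMatrix]
  congr 1
  · simp only [Hdown_eq_mul_padGe, Matrix.mul_assoc, Matrix.mul_sub,
      padGe_mul_transpose_mul_padGe_mul _ hle, padGe_mul_transpose_mul_padGe_mul _ le_rfl]
    abel
  · simp only [Hdown_eq_mul_padGe, Matrix.mul_assoc, padGe_mul_transpose_mul_padGe _ hle]

end Plant

theorem stmt6_general {N : ℕ} (P : Plant N)
    (hH : FullColRank P.H)
    (X Y : SFam P) (K : KGains P) (L : LGains P)
    (hcoup : Coupled P X K Y L) :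
    (∀ ω : ℝ, (Complex.I * (ω : ℂ)) ∉ spectrum ℂ (mc (AKL P K L 0)) →
      (Uone P K L (Complex.I * (ω : ℂ)))ᴴ * Uone P K L (Complex.I * (ω : ℂ)) = 1) ∧
    (∀ t : Fin N, ∀ ω : ℝ,
      (Complex.I * (ω : ℂ)) ∉ spectrum ℂ (mc (AKL P K L t.succ.castSucc)) →
      (Usucc P K L t (Complex.I * (ω : ℂ)))ᴴ * Usucc P K L t (Complex.I * (ω : ℂ)) = 1) := by
  obtain ⟨hare₀, hare, -, -⟩ := hcoup
  have hΨ := Psidd_posDef P hH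
  have hΨdet i : IsUnit (Psidd P i).det := (isUnit_iff_isUnit_det _).mp (hΨ i).isUnit
  refine ⟨fun ω hω => ?_, fun t ω hω => ?_⟩
  · rw [AKL_zero] at hω
    rw [Uone_eq]
    exact conjTranspose_mul_inv_mc_msqrt (hΨ 0) (hare₀.conjTranspose_transferMatrix_mul_self
      (hΨdet 0) (star_I_mul_ofReal ω) (isUnit_smul_one_sub_of_notMem_spectrum hω))
  · rw [AKL_castSucc_succ] at hω
    rw [Usucc_eq]
    refine conjTranspose_mul_inv_mc_msqrt (hΨ t.succ) ?_
    rw [conjTranspose_mc_mul_mul_self (Q := msqrt (Psidd P t.castSucc))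
      (R := Hdown P t.castSucc) (transpose_msqrt_mul_msqrt (hΨ _).posSemidef),
      mc_Hdown_mul_transferMatrix, AKL_castSucc_succ]
    exact (hare t).conjTranspose_transferMatrix_mul_self (hΨdet t.succ) (star_I_mul_ofReal ω)
      (isUnit_smul_one_sub_of_notMem_spectrum hω)

/-- each factor `U_i` is inner on the imaginary axis:
`U_i(iω)ᴴ U_i(iω) = I` whenever `iω` is not in the spectrum of `A^{KL}_{i,i−1}`.
The first conjunct is the case `i = 1` (`U_1`), the second handles `2 ≤ i`. -/
theorem stmt6 {N : ℕ} (P : Plant N)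
    (hdim : ∀ k : Fin (N+1), 0 < P.nd k ∧ 0 < P.md k ∧ 0 < P.pd k)
    (hA : IsLBT P.A) (hB : IsLBT P.B) (hC : IsLBT P.C)
    (hH : FullColRank P.H)
    (X Y : SFam P) (K : KGains P) (L : LGains P)
    (hcoup : Coupled P X K Y L) :
    (∀ ω : ℝ, (Complex.I * (ω : ℂ)) ∉ spectrum ℂ (mc (AKL P K L 0)) →
      (Uone P K L (Complex.I * (ω : ℂ)))ᴴ * Uone P K L (Complex.I * (ω : ℂ)) = 1) ∧
    (∀ t : Fin N, ∀ ω : ℝ,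
      (Complex.I * (ω : ℂ)) ∉ spectrum ℂ (mc (AKL P K L t.succ.castSucc)) →
      (Usucc P K L t (Complex.I * (ω : ℂ)))ᴴ * Usucc P K L t (Complex.I * (ω : ℂ)) = 1) :=
  stmt6_general P hH X Y K L hcoup

end TriLQG
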